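/- Fix N ≥ 2 and let σ₁,…,σ_N : ℝ → ℝ each be equal on ℝ to its Taylor series at 0; set f_i(x) := ∑_{t≥0} (|σ_i^{(t)}(0)|/t!) x^t, and assume each of these series converges for all x ∈ ℝ. Then the bivariate function K_N on I × I defined by K_N(X, X') := (f_N ∘ ⋯ ∘ f₂)(∑_{i=1}^n f₁(⟨X_i, X'_i⟩_{ℝ^d})) is a positive semi-definite kernel on I: it is symmetric and continuous, and for every m ≥ 1, every X^1,…,X^m ∈ I and every c₁,…,c_m ∈ ℝ, ∑_{j,k=1}^m c_j c_k K_N(X^j, X^k) ≥ 0. -/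

import Mathlib

open scoped BigOperators

/-- `taylorAbs σ x = ∑_{t≥0} (|σ^{(t)}(0)|/t!) x^t`, the series of `σ` with absolute values
of the Taylor coefficients. -/
noncomputable def taylorAbs (σ : ℝ → ℝ) (x : ℝ) : ℝ :=
  ∑' t : ℕ, (|iteratedDeriv t σ 0| / (t.factorial : ℝ)) * x ^ t

/-- `compTail f N = f N ∘ ⋯ ∘ f 2` (identity for `N ≤ 1`). -/
noncomputable def compTail (f : ℕ → ℝ → ℝ) : ℕ → ℝ → ℝ
  | 0 => id
  | 1 => id
  | (k + 2) => f (k + 2) ∘ compTail f (k + 1)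

/-- The multi-layer kernel
`K_N(X, X') = (f_N ∘ ⋯ ∘ f₂)(∑_{i=1}^n f₁(⟨X_i, X'_i⟩))` on `I = (S^{d-1})^n`,
where `f_i(x) = ∑_t (|σ_i^{(t)}(0)|/t!) x^t`. -/
noncomputable def cnnKernel (d n N : ℕ) (σ : ℕ → ℝ → ℝ)
    (X X' : Fin n → Metric.sphere (0 : EuclideanSpace ℝ (Fin d)) 1) : ℝ :=
  compTail (fun i => taylorAbs (σ i)) N
    (∑ j : Fin n,
      taylorAbs (σ 1)
        ((inner ℝ ((X j : EuclideanSpace ℝ (Fin d))) ((X' j : EuclideanSpace ℝ (Fin d))) : ℝ)))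


/-!
Every `f_i` is a power series with nonnegative coefficients converging on all of `ℝ`. Applied
entrywise, such a function preserves positive semidefiniteness: entrywise powers of a PSD matrix
are PSD by the Schur product theorem, and PSD matrices form a closed convex cone. The Gram matrix
of the inner products `⟨X_i, X'_i⟩` is PSD, so the kernel, obtained from it by entrywise `f₁`,
a sum over `i`, and the entrywise maps `f₂, …, f_N`, has PSD Gram matrices. Continuity follows
from local uniform convergence of the power series.
-/

open scoped ComplexOrder

namespace Matrix

variable {ι 𝕜 : Type*} [Fintype ι] [RCLike 𝕜]

theorem isClosed_setOf_posSemidef : IsClosed {A : Matrix ι ι 𝕜 | A.PosSemidef} := by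
  simp only [posSemidef_iff_dotProduct_mulVec, Set.ofPred_and, Set.ofPred_forall]
  refine (isClosed_eq continuous_id.matrix_conjTranspose continuous_id).inter
    (isClosed_iInter fun x => isClosed_le continuous_const ?_)
  exact continuous_const.dotProduct (continuous_id.matrix_mulVec continuous_const)

theorem PosSemidef.of_hasSum {β : Type*} {A : β → Matrix ι ι 𝕜} {S : Matrix ι ι 𝕜}
    (hS : HasSum A S) (hA : ∀ t, (A t).PosSemidef) : S.PosSemidef :=
  isClosed_setOf_posSemidef.mem_of_tendsto hS <|
    .of_forall fun s => posSemidef_sum s fun t _ => hA t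

theorem PosSemidef.map_pow {A : Matrix ι ι 𝕜} (hA : A.PosSemidef) (t : ℕ) :
    (A.map (· ^ t)).PosSemidef := by
  induction t with
  | zero =>
    have hones : A.map (· ^ 0) = vecMulVec 1 (star 1) := by ext; simp [vecMulVec_apply]
    simpa only [hones] using posSemidef_vecMulVec_self_star 1
  | succ t ih =>
    have hsucc : A.map (· ^ (t + 1)) = A.map (· ^ t) ⊙ A := by ext; simp [pow_succ]
    simpa only [hsucc] using ih.hadamard hA

theorem PosSemidef.map_tsum_mul_pow {A : Matrix ι ι ℝ} (hA : A.PosSemidef) {a : ℕ → ℝ}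
    (ha : ∀ t, 0 ≤ a t) (hsum : ∀ x, Summable fun t => a t * x ^ t) :
    (A.map fun x => ∑' t, a t * x ^ t).PosSemidef := by
  refine .of_hasSum (A := fun t => a t • A.map (· ^ t)) ?_ fun t => (hA.map_pow t).smul (ha t)
  exact Pi.hasSum.mpr fun i => Pi.hasSum.mpr fun j => (hsum (A i j)).hasSum

theorem PosSemidef.sum_mul_mul_nonneg {A : Matrix ι ι ℝ} (hA : A.PosSemidef) (c : ι → ℝ) :
    0 ≤ ∑ j, ∑ k, c j * c k * A j k := by
  refine (hA.dotProduct_mulVec_nonneg c).trans_eq ?_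
  simp only [dotProduct, mulVec, Pi.star_apply, star_trivial, Finset.mul_sum]
  exact Finset.sum_congr rfl fun j _ => Finset.sum_congr rfl fun k _ => by ring

end Matrix

theorem continuous_tsum_mul_pow {a : ℕ → ℝ} (hsum : ∀ x, Summable fun t => a t * x ^ t) :
    Continuous fun x => ∑' t, a t * x ^ t := by
  refine continuous_iff_continuousAt.mpr fun x => ?_
  set R := |x| + 1
  have hx : Metric.ball (0 : ℝ) R ∈ nhds x := Metric.isOpen_ball.mem_nhds (by simp [R])
  refine (continuousOn_tsum (fun t => by fun_prop) (hsum R).abs fun t y hy => ?_).continuousAt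
    hx
  rw [mem_ball_zero_iff, Real.norm_eq_abs] at hy
  rw [Real.norm_eq_abs, abs_mul, abs_mul, abs_pow, abs_pow, abs_of_pos (by positivity : 0 < R)]
  gcongr

section taylorAbs

variable {σ : ℝ → ℝ}
  (hσ : ∀ x : ℝ,
    Summable fun t : ℕ => (|iteratedDeriv t σ 0| / (t.factorial : ℝ)) * x ^ t)
include hσ

theorem continuous_taylorAbs : Continuous (taylorAbs σ) :=
  continuous_tsum_mul_pow hσ

theorem Matrix.PosSemidef.map_taylorAbs {ι : Type*} [Fintype ι] {A : Matrix ι ι ℝ}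
    (hA : A.PosSemidef) : (A.map (taylorAbs σ)).PosSemidef :=
  hA.map_tsum_mul_pow (fun _ => by positivity) hσ

end taylorAbs

theorem compTail_induction (f : ℕ → ℝ → ℝ) (P : (ℝ → ℝ) → Prop) (h_id : P id) (N : ℕ)
    (h_comp : ∀ i g, 2 ≤ i → i ≤ N → P g → P (f i ∘ g)) :
    P (compTail f N) := by
  induction N with
  | zero => exact h_id
  | succ N ih =>
    cases N with
    | zero => exact h_id
    | succ k =>
      exact h_comp _ _ le_add_self le_rfl (ih fun i g hi hik => h_comp i g hi (by omega))

section cnnKernel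

variable {d n N : ℕ} {σ : ℕ → ℝ → ℝ}

theorem cnnKernel_comm (X X' : Fin n → Metric.sphere (0 : EuclideanSpace ℝ (Fin d)) 1) :
    cnnKernel d n N σ X X' = cnnKernel d n N σ X' X := by
  simp only [cnnKernel, real_inner_comm]

variable (hN : 1 ≤ N)
  (hconv : ∀ i : ℕ, 1 ≤ i → i ≤ N → ∀ x : ℝ,
    Summable fun t : ℕ => (|iteratedDeriv t (σ i) 0| / (t.factorial : ℝ)) * x ^ t)
include hN hconv

theorem continuous_cnnKernel :
    Continuous (fun p : (Fin n → Metric.sphere (0 : EuclideanSpace ℝ (Fin d)) 1) ×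
        (Fin n → Metric.sphere (0 : EuclideanSpace ℝ (Fin d)) 1) =>
      cnnKernel d n N σ p.1 p.2) := by
  have hcomp : Continuous (compTail (fun i => taylorAbs (σ i)) N) :=
    compTail_induction _ Continuous continuous_id N fun i _ _ hiN hg =>
      (continuous_taylorAbs (hconv i (by omega) hiN)).comp hg
  refine hcomp.comp (continuous_finsetSum _ fun j _ => ?_)
  refine (continuous_taylorAbs (hconv 1 le_rfl hN)).comp (Continuous.inner ?_ ?_) <;> fun_prop

theorem posSemidef_cnnKernel {ι : Type*} [Fintype ι]
    (X : ι → Fin n → Metric.sphere (0 : EuclideanSpace ℝ (Fin d)) 1) :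
    (Matrix.of fun j k => cnnKernel d n N σ (X j) (X k)).PosSemidef := by
  have hsum : (∑ i, (Matrix.gram ℝ fun j => (X j i : EuclideanSpace ℝ (Fin d))).map
      (taylorAbs (σ 1))).PosSemidef :=
    Matrix.posSemidef_sum _ fun i _ =>
      (Matrix.posSemidef_gram ℝ _).map_taylorAbs (hconv 1 le_rfl hN)
  have hcomp : ∀ A : Matrix ι ι ℝ, A.PosSemidef →
      (A.map (compTail (fun i => taylorAbs (σ i)) N)).PosSemidef :=
    compTail_induction _ (fun g => ∀ A : Matrix ι ι ℝ, A.PosSemidef → (A.map g).PosSemidef)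
      (fun A hA => by simpa using hA) N fun i g _ hiN hg A hA => by
      simpa only [Matrix.map_map] using (hg A hA).map_taylorAbs (hconv i (by omega) hiN)
  convert hcomp _ hsum using 1
  ext j k
  simp [cnnKernel, Matrix.gram, Matrix.sum_apply]

end cnnKernel

theorem stmt_10_general (d n N : ℕ) (hN : 2 ≤ N)
    (σ : ℕ → ℝ → ℝ)
    (hconv : ∀ i : ℕ, 1 ≤ i → i ≤ N → ∀ x : ℝ,
      Summable fun t : ℕ => (|iteratedDeriv t (σ i) 0| / (t.factorial : ℝ)) * x ^ t) :
    (∀ X X' : Fin n → Metric.sphere (0 : EuclideanSpace ℝ (Fin d)) 1,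
        cnnKernel d n N σ X X' = cnnKernel d n N σ X' X) ∧
    Continuous (fun p : (Fin n → Metric.sphere (0 : EuclideanSpace ℝ (Fin d)) 1) ×
        (Fin n → Metric.sphere (0 : EuclideanSpace ℝ (Fin d)) 1) =>
      cnnKernel d n N σ p.1 p.2) ∧
    (∀ m : ℕ, 1 ≤ m →
      ∀ (X : Fin m → (Fin n → Metric.sphere (0 : EuclideanSpace ℝ (Fin d)) 1))
        (c : Fin m → ℝ),
        0 ≤ ∑ j : Fin m, ∑ k : Fin m, c j * c k * cnnKernel d n N σ (X j) (X k)) := by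
  have h1N : 1 ≤ N := by omega
  refine ⟨cnnKernel_comm, continuous_cnnKernel h1N hconv, fun m _ X c => ?_⟩
  simpa using (posSemidef_cnnKernel h1N hconv X).sum_mul_mul_nonneg c

/-- Let `N ≥ 2` and `σ₁, …, σ_N : ℝ → ℝ` each be equal on `ℝ` to its
Taylor series at `0`, with `f_i(x) := ∑_t (|σ_i^{(t)}(0)|/t!) x^t` convergent on all of `ℝ`.
Then `K_N` is a positive semi-definite kernel on `I = (S^{d-1})^n`: it is symmetric and
continuous, and all its Gram matrices are positive semi-definite. -/
theorem stmt_10 (d n N : ℕ) (hd : 2 ≤ d) (hn : 1 ≤ n) (hN : 2 ≤ N)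
    (σ : ℕ → ℝ → ℝ)
    (hσ : ∀ i : ℕ, 1 ≤ i → i ≤ N → ∀ u : ℝ,
      HasSum (fun t : ℕ => (iteratedDeriv t (σ i) 0 / (t.factorial : ℝ)) * u ^ t) (σ i u))
    (hconv : ∀ i : ℕ, 1 ≤ i → i ≤ N → ∀ x : ℝ,
      Summable fun t : ℕ => (|iteratedDeriv t (σ i) 0| / (t.factorial : ℝ)) * x ^ t) :
    (∀ X X' : Fin n → Metric.sphere (0 : EuclideanSpace ℝ (Fin d)) 1,
        cnnKernel d n N σ X X' = cnnKernel d n N σ X' X) ∧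
    Continuous (fun p : (Fin n → Metric.sphere (0 : EuclideanSpace ℝ (Fin d)) 1) ×
        (Fin n → Metric.sphere (0 : EuclideanSpace ℝ (Fin d)) 1) =>
      cnnKernel d n N σ p.1 p.2) ∧
    (∀ m : ℕ, 1 ≤ m →
      ∀ (X : Fin m → (Fin n → Metric.sphere (0 : EuclideanSpace ℝ (Fin d)) 1))
        (c : Fin m → ℝ),
        0 ≤ ∑ j : Fin m, ∑ k : Fin m, c j * c k * cnnKernel d n N σ (X j) (X k)) :=
  stmt_10_general d n N hN σ hconv
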